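/- Let F: ℝⁿ ⇒ ℝᵐ be a set-valued mapping whose graph is locally closed at (x̄,ȳ) ∈ gph F. Then F is strictly proto-differentiable at x̄ for ȳ if and only if both gph D_*F(x̄,ȳ) and gph D*F(x̄,ȳ) are linear subspaces satisfying gph D*F(x̄,ȳ) = {(y*,x*) : (x*,−y*) ∈ (gph D_*F(x̄,ȳ))^⊥}. Moreover, in this case F is graphically regular at (x̄,ȳ). -/

import Mathlib

open Filter Topology Metric Set
open scoped RealInnerProductSpace NNReal ENNReal

noncomputable section

/-- Euclidean space `ℝⁿ`. -/
abbrev Euc (n : ℕ) : Type := EuclideanSpace ℝ (Fin n)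

section NormedDefs

variable {X Y : Type*} [NormedAddCommGroup X] [NormedSpace ℝ X]
  [NormedAddCommGroup Y] [NormedSpace ℝ Y]

/-- The (Bouligand) tangent cone to `Ω` at `z`. -/
def tanCone (Ω : Set X) (z : X) : Set X :=
  {w | ∃ (t : ℕ → ℝ) (wk : ℕ → X), (∀ k, 0 < t k) ∧ Tendsto t atTop (𝓝 0) ∧
      Tendsto wk atTop (𝓝 w) ∧ ∀ k, z + t k • wk k ∈ Ω}

/-- The regular (Clarke) tangent cone to `Ω` at `z`. -/
def clarkeCone (Ω : Set X) (z : X) : Set X :=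
  {w | ∀ (zk : ℕ → X) (t : ℕ → ℝ), (∀ k, zk k ∈ Ω) → Tendsto zk atTop (𝓝 z) →
      (∀ k, 0 < t k) → Tendsto t atTop (𝓝 0) →
      ∃ wk : ℕ → X, Tendsto wk atTop (𝓝 w) ∧ ∀ k, zk k + t k • wk k ∈ Ω}

/-- The paratingent cone to `Ω` at `z`. -/
def paraCone (Ω : Set X) (z : X) : Set X :=
  {w | ∃ (zk : ℕ → X) (t : ℕ → ℝ) (wk : ℕ → X), (∀ k, zk k ∈ Ω) ∧
      Tendsto zk atTop (𝓝 z) ∧ (∀ k, 0 < t k) ∧ Tendsto t atTop (𝓝 0) ∧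
      Tendsto wk atTop (𝓝 w) ∧ ∀ k, zk k + t k • wk k ∈ Ω}

/-- `Ω` is strictly smooth at `z` if the Clarke tangent cone and the paratingent
cone coincide there. -/
def StrictlySmoothAt (Ω : Set X) (z : X) : Prop := clarkeCone Ω z = paraCone Ω z

/-- `Ω` is geometrically derivable at `z`. -/
def GeomDerivableAt (Ω : Set X) (z : X) : Prop :=
  ∀ w ∈ tanCone Ω z, ∀ t : ℕ → ℝ, (∀ k, 0 < t k) → Tendsto t atTop (𝓝 0) →
    ∃ wk : ℕ → X, Tendsto wk atTop (𝓝 w) ∧ ∀ k, z + t k • wk k ∈ Ω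

/-- `Ω` is locally closed at `z`. -/
def LocallyClosedAt (Ω : Set X) (z : X) : Prop :=
  ∃ V : Set X, V ∈ 𝓝 z ∧ IsClosed V ∧ IsClosed (Ω ∩ V)

/-- The set `s` is a linear subspace. -/
def IsLinearSubspace (s : Set X) : Prop := ∃ S : Submodule ℝ X, (S : Set X) = s

/-- The set `s` is a linear subspace of dimension `d`. -/
def HasDim (s : Set X) (d : ℕ) : Prop :=
  ∃ S : Submodule ℝ X, (S : Set X) = s ∧ Module.finrank ℝ S = d

/-- The graph of a set-valued mapping. -/
def gphOf (Fm : X → Set Y) : Set (X × Y) := {p | p.2 ∈ Fm p.1}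

/-- The graph of a single-valued mapping defined on `U`. -/
def gphOn (f : X → Y) (U : Set X) : Set (X × Y) := {p | p.1 ∈ U ∧ p.2 = f p.1}

/-- `f` (defined on `U`) is strictly continuous (locally Lipschitz) at `xb`. -/
def StrictlyContinuousAt' (f : X → Y) (U : Set X) (xb : X) : Prop :=
  ∃ U' ∈ 𝓝 xb, U' ⊆ U ∧ ∃ κ : ℝ, 0 ≤ κ ∧
    ∀ x ∈ U', ∀ x' ∈ U', ‖f x - f x'‖ ≤ κ * ‖x - x'‖

/-- `f` (defined on `U`) is calm at `xb`. -/
def CalmAt' (f : X → Y) (U : Set X) (xb : X) : Prop :=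
  ∃ U' ∈ 𝓝 xb, U' ⊆ U ∧ ∃ κ : ℝ, 0 ≤ κ ∧ ∀ x ∈ U', ‖f x - f xb‖ ≤ κ * ‖x - xb‖

/-- `f` (defined on `U`) is strictly differentiable at `xb`. -/
def StrictDiffOnAt (f : X → Y) (U : Set X) (xb : X) : Prop :=
  ∃ A : X →L[ℝ] Y, ∀ ε : ℝ, 0 < ε → ∃ δ > 0, ∀ x ∈ U, ∀ x' ∈ U,
    ‖x - xb‖ < δ → ‖x' - xb‖ < δ → ‖f x' - f x - A (x' - x)‖ ≤ ε * ‖x' - x‖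

/-- `f` (defined on `U`) is Fréchet differentiable at `xb`. -/
def FrechetDiffOnAt (f : X → Y) (U : Set X) (xb : X) : Prop :=
  ∃ A : X →L[ℝ] Y, ∀ ε : ℝ, 0 < ε → ∃ δ > 0, ∀ x ∈ U,
    ‖x - xb‖ < δ → ‖f x - f xb - A (x - xb)‖ ≤ ε * ‖x - xb‖

/-- The B-Jacobian (Bouligand limiting Jacobian) of `f` at `xb`. -/
def BJacobian (f : X → Y) (U : Set X) (xb : X) : Set (X →L[ℝ] Y) :=
  {A | ∃ (xk : ℕ → X) (Ak : ℕ → X →L[ℝ] Y),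
      (∀ k, xk k ∈ U ∧ HasFDerivAt f (Ak k) (xk k)) ∧
      Tendsto xk atTop (𝓝 xb) ∧ Tendsto Ak atTop (𝓝 A)}

/-- `Ω ⊆ X` is a Lipschitz manifold of dimension `d` (and codimension `c`) around `z`:
up to a `C¹` change of coordinates `Φ`, `Ω` locally coincides with the graph of a
Lipschitz mapping `f : U → ℝᶜ`, `U ⊆ ℝᵈ` open. -/
def IsLipschitzManifoldAt (Ω : Set X) (d c : ℕ) (z : X) : Prop :=
  ∃ (W : Set X) (Φ : X → Euc d × Euc c) (Ψ : Euc d × Euc c → X)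
    (U : Set (Euc d)) (f : Euc d → Euc c) (K : ℝ≥0),
    IsOpen W ∧ z ∈ W ∧ IsOpen (Φ '' W) ∧
    ContDiffOn ℝ 1 Φ W ∧ ContDiffOn ℝ 1 Ψ (Φ '' W) ∧
    (∀ x ∈ W, Ψ (Φ x) = x) ∧ (∀ y ∈ Φ '' W, Φ (Ψ y) = y) ∧
    IsOpen U ∧ LipschitzOnWith K f U ∧
    Φ '' (Ω ∩ W) = {p | p.1 ∈ U ∧ p.2 = f p.1}

/-- As `IsLipschitzManifoldAt`, with the Lipschitz mapping `f` moreover strictly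
differentiable at the transformed reference point. -/
def IsGraphStrictDiffAt (Ω : Set X) (d c : ℕ) (z : X) : Prop :=
  ∃ (W : Set X) (Φ : X → Euc d × Euc c) (Ψ : Euc d × Euc c → X)
    (U : Set (Euc d)) (f : Euc d → Euc c) (K : ℝ≥0),
    IsOpen W ∧ z ∈ W ∧ IsOpen (Φ '' W) ∧
    ContDiffOn ℝ 1 Φ W ∧ ContDiffOn ℝ 1 Ψ (Φ '' W) ∧
    (∀ x ∈ W, Ψ (Φ x) = x) ∧ (∀ y ∈ Φ '' W, Φ (Ψ y) = y) ∧
    IsOpen U ∧ LipschitzOnWith K f U ∧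
    Φ '' (Ω ∩ W) = {p | p.1 ∈ U ∧ p.2 = f p.1} ∧
    StrictDiffOnAt f U (Φ z).1

/-- Strong metric subregularity of a set-valued mapping at `(xb, yb)`. -/
def StronglySubregAt (Fm : X → Set Y) (xb : X) (yb : Y) : Prop :=
  ∃ κ : ℝ≥0, ∃ U ∈ 𝓝 xb, ∀ x ∈ U,
    (‖x - xb‖₊ : ℝ≥0∞) ≤ (κ : ℝ≥0∞) * EMetric.infEdist yb (Fm x)

/-- Metric regularity of a set-valued mapping around `(xb, yb)`. -/
def MetricallyRegularAround (Fm : X → Set Y) (xb : X) (yb : Y) : Prop :=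
  ∃ κ : ℝ≥0, ∃ U ∈ 𝓝 xb, ∃ V ∈ 𝓝 yb, ∀ x ∈ U, ∀ y ∈ V,
    EMetric.infEdist x {x' | y ∈ Fm x'} ≤ (κ : ℝ≥0∞) * EMetric.infEdist y (Fm x)

/-- Strong metric regularity of a set-valued mapping around `(xb, yb)`. -/
def StronglyRegularAround (Fm : X → Set Y) (xb : X) (yb : Y) : Prop :=
  MetricallyRegularAround Fm xb yb ∧
  ∃ (U' : Set X) (V' : Set Y) (h : Y → X), IsOpen U' ∧ IsOpen V' ∧
    xb ∈ U' ∧ yb ∈ V' ∧ h yb = xb ∧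
    gphOf Fm ∩ (U' ×ˢ V') = {p | p.2 ∈ V' ∧ p.1 = h p.2}

end NormedDefs

section InnerDefs

variable {E F : Type*} [NormedAddCommGroup E] [InnerProductSpace ℝ E]
  [NormedAddCommGroup F] [InnerProductSpace ℝ F]

/-- The regular (Fréchet) normal cone: the polar of the tangent cone. -/
def regNormal (Ω : Set E) (z : E) : Set E := {v | ∀ w ∈ tanCone Ω z, ⟪v, w⟫ ≤ 0}

/-- The limiting (Mordukhovich) normal cone. -/
def limNormal (Ω : Set E) (z : E) : Set E :=
  {v | ∃ zk vk : ℕ → E, (∀ k, zk k ∈ Ω) ∧ Tendsto zk atTop (𝓝 z) ∧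
      (∀ k, vk k ∈ regNormal Ω (zk k)) ∧ Tendsto vk atTop (𝓝 v)}

/-- `Ω` is normally regular at `z`. -/
def NormallyRegularAt (Ω : Set E) (z : E) : Prop := regNormal Ω z = limNormal Ω z

/-- The orthogonal complement (as a set) of a set. -/
def orthSet (s : Set E) : Set E := {v | ∀ w ∈ s, ⟪v, w⟫ = 0}

/-- `Ω` is semismooth* at `zb`. -/
def SemismoothStarAt (Ω : Set E) (zb : E) : Prop :=
  ∀ ε : ℝ, 0 < ε → ∃ δ > 0, ∀ z ∈ Ω, ‖z - zb‖ < δ → ∀ v ∈ limNormal Ω z,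
    |⟪v, z - zb⟫| ≤ ε * ‖z - zb‖ * ‖v‖

/-- The canonical inner product of the product of two inner product spaces. -/
def inner2 (p q : E × F) : ℝ := ⟪p.1, q.1⟫ + ⟪p.2, q.2⟫

/-- The regular normal cone for subsets of a product space. -/
def regNormal2 (Ω : Set (E × F)) (z : E × F) : Set (E × F) :=
  {v | ∀ w ∈ tanCone Ω z, inner2 v w ≤ 0}

/-- The limiting normal cone for subsets of a product space. -/
def limNormal2 (Ω : Set (E × F)) (z : E × F) : Set (E × F) :=
  {v | ∃ zk vk : ℕ → E × F, (∀ k, zk k ∈ Ω) ∧ Tendsto zk atTop (𝓝 z) ∧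
      (∀ k, vk k ∈ regNormal2 Ω (zk k)) ∧ Tendsto vk atTop (𝓝 v)}

/-- Normal regularity for subsets of a product space. -/
def NormallyRegular2At (Ω : Set (E × F)) (z : E × F) : Prop :=
  regNormal2 Ω z = limNormal2 Ω z

/-- Orthogonal complement (as a set) in a product space. -/
def orthSet2 (s : Set (E × F)) : Set (E × F) := {v | ∀ w ∈ s, inner2 v w = 0}

/-- The graph of the limiting coderivative of a mapping with graph `Γ` at `z`:
`{(y*, x*) : (x*, -y*) ∈ N_Γ(z)}`. -/
def coderivGraph (Γ : Set (E × F)) (z : E × F) : Set (F × E) :=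
  {q | (q.2, -q.1) ∈ limNormal2 Γ z}

/-- The semismooth* property for subsets of a product space (i.e. for mappings). -/
def SemismoothStar2At (Ω : Set (E × F)) (zb : E × F) : Prop :=
  ∀ ε : ℝ, 0 < ε → ∃ δ > 0, ∀ z ∈ Ω, ‖z - zb‖ < δ → ∀ v ∈ limNormal2 Ω z,
    |inner2 v (z - zb)| ≤ ε * ‖z - zb‖ * ‖v‖

/-- The regular subdifferential of an extended-real-valued function. -/
def regSubdiff (φ : E → EReal) (xb : E) : Set E :=
  {v | φ xb ≠ ⊤ ∧ φ xb ≠ ⊥ ∧ ∀ ε : ℝ, 0 < ε → ∃ δ > 0, ∀ x, ‖x - xb‖ < δ →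
      φ xb + ((⟪v, x - xb⟫ - ε * ‖x - xb‖ : ℝ) : EReal) ≤ φ x}

/-- The limiting (Mordukhovich) subdifferential. -/
def limSubdiff (φ : E → EReal) (xb : E) : Set E :=
  {v | ∃ xk vk : ℕ → E, Tendsto xk atTop (𝓝 xb) ∧
      Tendsto (fun k => φ (xk k)) atTop (𝓝 (φ xb)) ∧
      (∀ k, vk k ∈ regSubdiff φ (xk k)) ∧ Tendsto vk atTop (𝓝 v)}

/-- `φ` is prox-regular at `xb` for `vb` with parameters `r ≥ 0` and `ε > 0`. -/
def ProxRegular (φ : E → EReal) (xb vb : E) (r ε : ℝ) : Prop :=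
  ∀ x' x v, ‖x' - xb‖ < ε → v ∈ limSubdiff φ x → ‖x - xb‖ < ε → ‖v - vb‖ < ε →
    φ x < φ xb + (ε : EReal) →
    φ x + ((⟪v, x' - x⟫ - r / 2 * ‖x' - x‖ ^ 2 : ℝ) : EReal) ≤ φ x'

/-- The graph of the `φ`-attentive `ε`-localization of `∂φ` around `(xb, vb)`. -/
def attLocGraph (φ : E → EReal) (xb vb : E) (ε : ℝ) : Set (E × E) :=
  {p | p.2 ∈ limSubdiff φ p.1 ∧ ‖p.1 - xb‖ < ε ∧ ‖p.2 - vb‖ < ε ∧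
      φ p.1 < φ xb + (ε : EReal)}

end InnerDefs

/-- The map `ℝⁿ → ℝᵈ × ℝᶜ` obtained from a permutation (re-indexing) of the
coordinates followed by splitting them into the first `d` and the last `c` ones. -/
def permSplit {n d c : ℕ} (e : Fin n ≃ (Fin d ⊕ Fin c)) (z : Euc n) : Euc d × Euc c :=
  (show Euc d from WithLp.toLp 2 (fun i => z (e.symm (Sum.inl i))),
   show Euc c from WithLp.toLp 2 (fun j => z (e.symm (Sum.inr j))))

/-!
For a locally closed set `Ω`, the Clarke tangent cone `T̂_Ω(z)` is the polar of the limiting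
normal cone `N_Ω(z)`. The inclusion `N_Ω(z)° ⊆ T̂_Ω(z)` is the substantial one: if `z_k + t_k w`
stays at distance `≥ ε t_k` from `Ω`, maximizing `τ ↦ d(z_k + τ w, Ω) - ετ/2` on `[0, t_k]` yields
points whose proximal normals `v_k` satisfy `⟪v_k, w⟫ ≥ ε/4`; a limit of the `v_k` is a limiting
normal that is not polar to `w`.

If `T̂_Ω(z) = T^P_Ω(z)`, the paratingent cone is a subspace (`T̂` is a convex cone, `T^P` is
symmetric), so `N_Ω(z) ⊆ T̂°` lies in its orthogonal complement, which in turn consists of regular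
normals since `T_Ω(z) ⊆ T^P_Ω(z)`. Conversely `N_Ω(z) = (T^P_Ω(z))^⊥` puts `T^P_Ω(z)` inside
`N_Ω(z)° = T̂_Ω(z)`. For graphs this is transported to `WithLp 2 (E × F)`, where `inner2` is the
inner product, and the coderivative graph is the image of the normal cone under
`(x*, y*) ↦ (-y*, x*)`.
-/

lemma LocallyClosedAt.preimage {X Y : Type*} [NormedAddCommGroup X] [NormedAddCommGroup Y]
    {f : X → Y} (hf : Continuous f) {Ω : Set Y} {z : X} (h : LocallyClosedAt Ω (f z)) :
    LocallyClosedAt (f ⁻¹' Ω) z := by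
  obtain ⟨V, hV, hVc, hΩV⟩ := h
  exact ⟨f ⁻¹' V, hf.continuousAt.preimage_mem_nhds hV, hVc.preimage hf, hΩV.preimage hf⟩

section Cones

variable {X Y : Type*} [NormedAddCommGroup X] [NormedSpace ℝ X]
  [NormedAddCommGroup Y] [NormedSpace ℝ Y] {Ω : Set X} {z w : X}

lemma tendsto_add_smul {zk wk : ℕ → X} {t : ℕ → ℝ} (hz : Tendsto zk atTop (𝓝 z))
    (ht : Tendsto t atTop (𝓝 0)) (hw : Tendsto wk atTop (𝓝 w)) :
    Tendsto (fun k => zk k + t k • wk k) atTop (𝓝 z) := by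
  simpa using hz.add (ht.smul hw)

lemma zero_mem_clarkeCone : (0 : X) ∈ clarkeCone Ω z :=
  fun _ _ hzk _ _ _ => ⟨0, tendsto_const_nhds, fun k => by simpa using hzk k⟩

lemma add_mem_clarkeCone {w₁ w₂ : X} (h₁ : w₁ ∈ clarkeCone Ω z) (h₂ : w₂ ∈ clarkeCone Ω z) :
    w₁ + w₂ ∈ clarkeCone Ω z := by
  intro zk t hzk hz ht ht0
  obtain ⟨w₁k, hw₁, hm₁⟩ := h₁ zk t hzk hz ht ht0
  obtain ⟨w₂k, hw₂, hm₂⟩ := h₂ _ t hm₁ (tendsto_add_smul hz ht0 hw₁) ht ht0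
  exact ⟨fun k => w₁k k + w₂k k, hw₁.add hw₂, fun k => by simpa [smul_add, add_assoc] using hm₂ k⟩

lemma smul_mem_clarkeCone {c : ℝ} (hc : 0 < c) (h : w ∈ clarkeCone Ω z) :
    c • w ∈ clarkeCone Ω z := by
  intro zk t hzk hz ht ht0
  obtain ⟨wk, hwk, hm⟩ := h zk (fun k => c * t k) hzk hz (fun k => mul_pos hc (ht k))
    (by simpa using ht0.const_mul c)
  exact ⟨fun k => c • wk k, hwk.const_smul c, fun k => by simpa [smul_smul, mul_comm] using hm k⟩

lemma clarkeCone_subset_tanCone (hz : z ∈ Ω) : clarkeCone Ω z ⊆ tanCone Ω z := by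
  intro w hw
  obtain ⟨wk, hwk, hm⟩ := hw (fun _ => z) (fun k => 1 / (k + 1)) (fun _ => hz)
    tendsto_const_nhds (fun _ => Nat.one_div_pos_of_nat) tendsto_one_div_add_atTop_nhds_zero_nat
  exact ⟨_, wk, fun _ => Nat.one_div_pos_of_nat, tendsto_one_div_add_atTop_nhds_zero_nat, hwk, hm⟩

lemma tanCone_subset_paraCone (hz : z ∈ Ω) : tanCone Ω z ⊆ paraCone Ω z :=
  fun _ ⟨t, wk, ht, ht0, hwk, hm⟩ =>
    ⟨fun _ => z, t, wk, fun _ => hz, tendsto_const_nhds, ht, ht0, hwk, hm⟩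

lemma neg_mem_paraCone (h : w ∈ paraCone Ω z) : -w ∈ paraCone Ω z := by
  obtain ⟨zk, t, wk, hzk, hz, ht, ht0, hwk, hm⟩ := h
  exact ⟨fun k => zk k + t k • wk k, t, fun k => -wk k, hm, tendsto_add_smul hz ht0 hwk, ht, ht0,
    hwk.neg, fun k => by simpa using hzk k⟩

lemma StrictlySmoothAt.isLinearSubspace_paraCone (h : StrictlySmoothAt Ω z) :
    IsLinearSubspace (paraCone Ω z) := by
  have neg_mem {w : X} (hw : w ∈ clarkeCone Ω z) : -w ∈ clarkeCone Ω z :=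
    h ▸ neg_mem_paraCone (h ▸ hw)
  refine ⟨{ carrier := clarkeCone Ω z
            add_mem' := add_mem_clarkeCone
            zero_mem' := zero_mem_clarkeCone
            smul_mem' := fun c w hw => ?_ }, h⟩
  rcases lt_trichotomy c 0 with hc | rfl | hc
  · simpa using smul_mem_clarkeCone (neg_pos.2 hc) (neg_mem hw)
  · simpa using zero_mem_clarkeCone
  · exact smul_mem_clarkeCone hc hw

lemma tanCone_preimage_subset (L : X ≃L[ℝ] Y) (Ω : Set Y) (z : X) :
    tanCone (L ⁻¹' Ω) z ⊆ L ⁻¹' tanCone Ω (L z) :=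
  fun w ⟨t, wk, ht, ht0, hwk, hm⟩ =>
    ⟨t, fun k => L (wk k), ht, ht0, (L.continuous.tendsto w).comp hwk,
      fun k => by simpa using hm k⟩

lemma tanCone_preimage (L : X ≃L[ℝ] Y) (Ω : Set Y) (z : X) :
    tanCone (L ⁻¹' Ω) z = L ⁻¹' tanCone Ω (L z) := by
  refine (tanCone_preimage_subset L Ω z).antisymm fun w hw => ?_
  have := tanCone_preimage_subset L.symm (L ⁻¹' Ω) (L z) (by rwa [L.symm_preimage_preimage])
  rwa [Set.mem_preimage, L.symm_apply_apply, L.symm_apply_apply] at this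

lemma paraCone_preimage_subset (L : X ≃L[ℝ] Y) (Ω : Set Y) (z : X) :
    paraCone (L ⁻¹' Ω) z ⊆ L ⁻¹' paraCone Ω (L z) :=
  fun w ⟨zk, t, wk, hzk, hz, ht, ht0, hwk, hm⟩ =>
    ⟨fun k => L (zk k), t, fun k => L (wk k), hzk, (L.continuous.tendsto z).comp hz, ht, ht0,
      (L.continuous.tendsto w).comp hwk, fun k => by simpa using hm k⟩

lemma paraCone_preimage (L : X ≃L[ℝ] Y) (Ω : Set Y) (z : X) :
    paraCone (L ⁻¹' Ω) z = L ⁻¹' paraCone Ω (L z) := by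
  refine (paraCone_preimage_subset L Ω z).antisymm fun w hw => ?_
  have := paraCone_preimage_subset L.symm (L ⁻¹' Ω) (L z) (by rwa [L.symm_preimage_preimage])
  rwa [Set.mem_preimage, L.symm_apply_apply, L.symm_apply_apply] at this

lemma clarkeCone_preimage_subset (L : X ≃L[ℝ] Y) (Ω : Set Y) (z : X) :
    clarkeCone (L ⁻¹' Ω) z ⊆ L ⁻¹' clarkeCone Ω (L z) := by
  intro w hw zk t hzk hz ht ht0
  obtain ⟨wk, hwk, hm⟩ := hw (fun k => L.symm (zk k)) t (fun k => by simpa using hzk k)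
    (by simpa [Function.comp_def] using (L.symm.continuous.tendsto (L z)).comp hz) ht ht0
  exact ⟨fun k => L (wk k), (L.continuous.tendsto w).comp hwk, fun k => by simpa using hm k⟩

lemma clarkeCone_preimage (L : X ≃L[ℝ] Y) (Ω : Set Y) (z : X) :
    clarkeCone (L ⁻¹' Ω) z = L ⁻¹' clarkeCone Ω (L z) := by
  refine (clarkeCone_preimage_subset L Ω z).antisymm fun w hw => ?_
  have := clarkeCone_preimage_subset L.symm (L ⁻¹' Ω) (L z) (by rwa [L.symm_preimage_preimage])
  rwa [Set.mem_preimage, L.symm_apply_apply, L.symm_apply_apply] at this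

lemma strictlySmoothAt_preimage_iff (L : X ≃L[ℝ] Y) (Ω : Set Y) (z : X) :
    StrictlySmoothAt (L ⁻¹' Ω) z ↔ StrictlySmoothAt Ω (L z) := by
  rw [StrictlySmoothAt, StrictlySmoothAt, clarkeCone_preimage, paraCone_preimage]
  exact Set.preimage_eq_preimage L.surjective

end Cones

section Normals

variable {H : Type*} [NormedAddCommGroup H] [InnerProductSpace ℝ H] {Ω : Set H} {z w : H}

lemma regNormal_subset_limNormal (hz : z ∈ Ω) : regNormal Ω z ⊆ limNormal Ω z :=
  fun v hv => ⟨fun _ => z, fun _ => v, fun _ => hz, tendsto_const_nhds, fun _ => hv,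
    tendsto_const_nhds⟩

lemma mem_limNormal_of_eventually {zk vk : ℕ → H} {v : H}
    (h : ∀ᶠ k in atTop, zk k ∈ Ω ∧ vk k ∈ regNormal Ω (zk k))
    (hz : Tendsto zk atTop (𝓝 z)) (hv : Tendsto vk atTop (𝓝 v)) : v ∈ limNormal Ω z := by
  obtain ⟨N, hN⟩ := eventually_atTop.1 h
  exact ⟨fun k => zk (k + N), fun k => vk (k + N), fun k => (hN _ le_add_self).1,
    (tendsto_add_atTop_iff_nat N).2 hz, fun k => (hN _ le_add_self).2,
    (tendsto_add_atTop_iff_nat N).2 hv⟩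

lemma smul_mem_regNormal {v : H} {c : ℝ} (hc : 0 ≤ c) (hv : v ∈ regNormal Ω z) :
    c • v ∈ regNormal Ω z := fun w hw => by
  rw [real_inner_smul_left]
  exact mul_nonpos_of_nonneg_of_nonpos hc (hv w hw)

lemma sub_mem_regNormal_of_eventually_dist_le {a p : H}
    (h : ∀ᶠ u in 𝓝 p, u ∈ Ω → dist a p ≤ dist a u) : a - p ∈ regNormal Ω p := by
  rintro w ⟨t, wk, ht, ht0, hwk, hm⟩
  have hineq : ∀ᶠ k in atTop, ⟪a - p, wk k⟫ ≤ t k / 2 * ‖wk k‖ ^ 2 := by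
    filter_upwards [(tendsto_add_smul tendsto_const_nhds ht0 hwk).eventually h] with k hk
    have hsq : ‖a - p‖ ^ 2 ≤ ‖a - p - t k • wk k‖ ^ 2 := by
      have := hk (hm k)
      rw [dist_eq_norm, dist_eq_norm, sub_add_eq_sub_sub] at this
      gcongr
    rw [norm_sub_sq_real (a - p) (t k • wk k), real_inner_smul_right, norm_smul,
      Real.norm_of_nonneg (ht k).le] at hsq
    nlinarith [ht k]
  refine le_of_tendsto_of_tendsto (tendsto_const_nhds.inner hwk) ?_ hineq
  simpa using (ht0.div_const 2).mul (hwk.norm.pow 2)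

lemma orthSet_paraCone_subset_regNormal (hz : z ∈ Ω) : orthSet (paraCone Ω z) ⊆ regNormal Ω z :=
  fun _ hv w hw => (hv w (tanCone_subset_paraCone hz hw)).le

variable [ProperSpace H]

lemma inner_le_of_mem_regNormal {v : H} (hv : v ∈ regNormal Ω z) {ε : ℝ} (hε : 0 < ε) :
    ∃ δ > 0, ∀ z' ∈ Ω, ‖z' - z‖ < δ → ⟪v, z' - z⟫ ≤ ε * ‖z' - z‖ := by
  by_contra! hcon
  choose zk hzk hzkδ hzkv using fun k : ℕ => hcon (1 / (k + 1)) Nat.one_div_pos_of_nat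
  set t : ℕ → ℝ := fun k => ‖zk k - z‖
  have ht : ∀ k, 0 < t k := fun k => norm_pos_iff.2 fun h0 => by simpa [h0] using hzkv k
  set u : ℕ → H := fun k => (t k)⁻¹ • (zk k - z)
  have hu : ∀ k, u k ∈ sphere (0 : H) 1 := fun k => by
    simpa [u, norm_smul, abs_of_pos (ht k)] using inv_mul_cancel₀ (ht k).ne'
  obtain ⟨ub, -, φ, hφ, huφ⟩ := (isCompact_sphere (0 : H) 1).tendsto_subseq hu
  have ht0 : Tendsto t atTop (𝓝 0) := squeeze_zero (fun k => (ht k).le) (fun k => (hzkδ k).le)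
    tendsto_one_div_add_atTop_nhds_zero_nat
  have hub : ub ∈ tanCone Ω z := ⟨t ∘ φ, u ∘ φ, fun k => ht _, ht0.comp hφ.tendsto_atTop, huφ,
    fun k => by simpa [u, smul_smul, mul_inv_cancel₀ (ht (φ k)).ne'] using hzk (φ k)⟩
  have hεu : ∀ k, ε ≤ ⟪v, u k⟫ := fun k => by
    rw [real_inner_smul_right, ← div_eq_inv_mul, le_div_iff₀ (ht k)]
    exact (hzkv k).le
  have := ge_of_tendsto (tendsto_const_nhds.inner huφ) (Eventually.of_forall fun k => hεu (φ k))
  linarith [hv ub hub]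

lemma inner_nonpos_of_mem_limNormal_of_mem_clarkeCone {v : H} (hv : v ∈ limNormal Ω z)
    (hw : w ∈ clarkeCone Ω z) : ⟪v, w⟫ ≤ 0 := by
  obtain ⟨zk, vk, hzk, hz, hvk, hv⟩ := hv
  choose δ hδ hδv using fun k : ℕ =>
    inner_le_of_mem_regNormal (hvk k) (Nat.one_div_pos_of_nat (n := k))
  -- the steps `t k • wk k` must stay in the balls where `δ k` controls `vk k`
  set t : ℕ → ℝ := fun k => min (δ k / (‖w‖ + 1)) (1 / (k + 1))
  have ht : ∀ k, 0 < t k := fun k => lt_min (div_pos (hδ k) (by positivity)) Nat.one_div_pos_of_nat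
  have ht0 : Tendsto t atTop (𝓝 0) := squeeze_zero (fun k => (ht k).le)
    (fun k => min_le_right _ _) tendsto_one_div_add_atTop_nhds_zero_nat
  obtain ⟨wk, hwk, hm⟩ := hw zk t hzk hz ht ht0
  have hle : ∀ᶠ k in atTop, ⟪vk k, wk k⟫ ≤ 1 / (k + 1) * ‖wk k‖ := by
    filter_upwards [hwk.norm.eventually (gt_mem_nhds (lt_add_one ‖w‖))] with k hk
    have hsmall : t k * ‖wk k‖ < δ k := calc
      t k * ‖wk k‖ ≤ δ k / (‖w‖ + 1) * ‖wk k‖ := by gcongr; exact min_le_left _ _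
      _ < δ k / (‖w‖ + 1) * (‖w‖ + 1) := by gcongr; exact div_pos (hδ k) (by positivity)
      _ = δ k := div_mul_cancel₀ _ (by positivity)
    have := hδv k _ (hm k) (by rwa [add_sub_cancel_left, norm_smul, Real.norm_of_nonneg (ht k).le])
    rw [add_sub_cancel_left, real_inner_smul_right, norm_smul, Real.norm_of_nonneg (ht k).le]
      at this
    exact le_of_mul_le_mul_left (by linarith) (ht k)
  exact le_of_tendsto_of_tendsto (hv.inner hwk)
    (by simpa using tendsto_one_div_add_atTop_nhds_zero_nat.mul hwk.norm) hle

end Normals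

lemma exists_mem_Ioc_forall_add_mul_sub_le {g : ℝ → ℝ} (hg : Continuous g) (hg0 : g 0 = 0)
    {t ε : ℝ} (ht : 0 < t) (hε : 0 < ε) (hgt : ε * t ≤ g t) :
    ∃ τ ∈ Ioc 0 t, 0 < g τ ∧ ∀ σ ∈ Icc 0 τ, g σ + ε / 2 * (τ - σ) ≤ g τ := by
  obtain ⟨τ, hτ, hmax⟩ := isCompact_Icc.exists_isMaxOn (nonempty_Icc.2 ht.le)
    (f := fun σ => g σ - ε / 2 * σ) (hg.sub (continuous_const.mul continuous_id)).continuousOn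
  have hmax' : ∀ σ ∈ Icc 0 t, g σ - ε / 2 * σ ≤ g τ - ε / 2 * τ := fun σ hσ => hmax hσ
  have hτt := hmax' t (right_mem_Icc.2 ht.le)
  have hτ0 : 0 < τ := hτ.1.lt_of_ne fun h => by subst h; rw [hg0] at hτt; nlinarith
  refine ⟨τ, ⟨hτ0, hτ.2⟩, by nlinarith [hτ.1], fun σ hσ => ?_⟩
  linarith [hmax' σ ⟨hσ.1, hσ.2.trans hτ.2⟩]

section Distance

variable {H : Type*} [NormedAddCommGroup H] [InnerProductSpace ℝ H] {C : Set H} {w : H}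

lemma inner_ge_of_infDist_add_smul_ge {a p : H} {ε s : ℝ} (hε : 0 ≤ ε) (hs : 0 < s)
    (hp : p ∈ C) (hap : infDist a C = dist a p)
    (hgrowth : infDist a C + ε / 2 * s ≤ infDist (a + s • w) C)
    (hsmall : s * ‖w‖ ^ 2 ≤ ε / 2 * dist a p) :
    ε / 4 * dist a p ≤ ⟪a - p, w⟫ := by
  rw [hap, dist_eq_norm] at hgrowth
  rw [dist_eq_norm] at hsmall ⊢
  have h₁ : ‖a - p‖ + ε / 2 * s ≤ ‖a - p + s • w‖ := hgrowth.trans <|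
    (infDist_le_dist_of_mem hp).trans_eq (by rw [dist_eq_norm, add_sub_right_comm])
  have h₂ := pow_le_pow_left₀ (by positivity) h₁ 2
  rw [norm_add_sq_real, real_inner_smul_right, norm_smul, Real.norm_of_nonneg hs.le] at h₂
  nlinarith [mul_le_mul_of_nonneg_left hsmall hs.le, sq_nonneg (ε * s)]

variable [ProperSpace H]

lemma exists_nearest_inner_ge (hC : IsClosed C) {z₀ : H} (hz₀ : z₀ ∈ C) {t ε : ℝ} (ht : 0 < t)
    (hε : 0 < ε) (hsep : ε * t ≤ infDist (z₀ + t • w) C) :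
    ∃ a, ∃ p ∈ C, infDist a C = dist a p ∧ 0 < dist a p ∧ dist p z₀ ≤ 2 * t * ‖w‖ ∧
      ε / 4 * dist a p ≤ ⟪a - p, w⟫ := by
  set g : ℝ → ℝ := fun τ => infDist (z₀ + τ • w) C
  have hg : Continuous g :=
    (continuous_infDist_pt C).comp (continuous_const.add (continuous_id.smul continuous_const))
  obtain ⟨τ, hτ, hgτ, hgrowth⟩ := exists_mem_Ioc_forall_add_mul_sub_le hg
    (by simp [g, infDist_zero_of_mem hz₀]) ht hε hsep
  obtain ⟨s, hs, hsτ, hs₁, hs₂⟩ :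
      ∃ s > 0, s ≤ τ ∧ s * ‖w‖ ≤ g τ / 2 ∧ s * ‖w‖ ^ 2 ≤ ε * g τ / 4 := by
    have hmul (c : ℝ) : Tendsto (fun s : ℝ => s * c) (𝓝 0) (𝓝 0) := by
      simpa using (continuous_mul_const c).tendsto 0
    have hsmall : ∀ᶠ s in 𝓝 (0 : ℝ),
        s ≤ τ ∧ s * ‖w‖ ≤ g τ / 2 ∧ s * ‖w‖ ^ 2 ≤ ε * g τ / 4 :=
      (eventually_le_nhds hτ.1).and (((hmul _).eventually (eventually_le_nhds (half_pos hgτ))).and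
        ((hmul _).eventually (eventually_le_nhds (by have := mul_pos hε hgτ; positivity))))
    exact ((hsmall.filter_mono (nhdsWithin_le_nhds (s := Ioi 0))).and
      self_mem_nhdsWithin).exists.imp fun s ⟨h, hs⟩ => ⟨hs, h⟩
  -- from `a` to `a + s • w` the distance to `C` grows at rate `ε / 2`
  set a := z₀ + (τ - s) • w
  obtain ⟨p, hp, hap⟩ := hC.exists_infDist_eq_dist ⟨z₀, hz₀⟩ a
  have has : a + s • w = z₀ + τ • w := by simp only [a]; module
  have hlip : g τ ≤ dist a p + s * ‖w‖ := calc
    g τ = infDist (a + s • w) C := by rw [has]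
    _ ≤ infDist a C + dist (a + s • w) a := infDist_le_infDist_add_dist
    _ = dist a p + s * ‖w‖ := by simp [hap, norm_smul, abs_of_pos hs]
  have had : dist a z₀ = (τ - s) * ‖w‖ := by
    rw [dist_self_add_left, norm_smul, Real.norm_of_nonneg (sub_nonneg.2 hsτ)]
  have hdist : dist a p ≤ dist a z₀ := hap ▸ infDist_le_dist_of_mem hz₀
  refine ⟨a, p, hp, hap, by linarith, ?_, inner_ge_of_infDist_add_smul_ge hε.le hs hp hap ?_ ?_⟩
  · calc dist p z₀ ≤ dist a p + dist a z₀ := dist_triangle_left _ _ _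
      _ ≤ 2 * t * ‖w‖ := by nlinarith [norm_nonneg w, hτ.2]
  · simpa [has] using hgrowth (τ - s) ⟨sub_nonneg.2 hsτ, sub_le_self _ hs.le⟩
  · nlinarith

end Distance

section PolarOfLimitingNormals

variable {H : Type*} [NormedAddCommGroup H] [InnerProductSpace ℝ H] [ProperSpace H]
  {Ω V : Set H} {z w : H}

lemma exists_mem_limNormal_inner_ge (hV : V ∈ 𝓝 z) (hC : IsClosed (Ω ∩ V)) {zk : ℕ → H}
    {t : ℕ → ℝ} (hzk : ∀ k, zk k ∈ Ω ∩ V) (hz : Tendsto zk atTop (𝓝 z)) (ht : ∀ k, 0 < t k)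
    (ht0 : Tendsto t atTop (𝓝 0)) {ε : ℝ} (hε : 0 < ε)
    (hsep : ∀ k, ε * t k ≤ infDist (zk k + t k • w) (Ω ∩ V)) :
    ∃ v ∈ limNormal Ω z, ε / 4 ≤ ⟪v, w⟫ := by
  choose a p hp hap hpos hpz hinner using fun k =>
    exists_nearest_inner_ge hC (hzk k) (ht k) hε (hsep k)
  have hp_tendsto : Tendsto p atTop (𝓝 z) := by
    refine tendsto_iff_dist_tendsto_zero.2 <| squeeze_zero (fun _ => dist_nonneg)
      (g := fun k => 2 * t k * ‖w‖ + dist (zk k) z)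
      (fun k => by linarith [dist_triangle (p k) (zk k) z, hpz k]) ?_
    simpa using ((ht0.const_mul 2).mul_const ‖w‖).add (tendsto_iff_dist_tendsto_zero.1 hz)
  set v : ℕ → H := fun k => (dist (a k) (p k))⁻¹ • (a k - p k)
  have hv : ∀ k, v k ∈ sphere (0 : H) 1 := fun k => by
    simpa [v, norm_smul, dist_eq_norm] using inv_mul_cancel₀ (dist_eq_norm (a k) (p k) ▸ hpos k).ne'
  have hvw : ∀ k, ε / 4 ≤ ⟪v k, w⟫ := fun k => by
    rw [real_inner_smul_left, ← div_eq_inv_mul, le_div_iff₀ (hpos k)]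
    exact hinner k
  have hreg : ∀ᶠ k in atTop, p k ∈ Ω ∧ v k ∈ regNormal Ω (p k) := by
    filter_upwards [hp_tendsto.eventually (interior_mem_nhds.2 hV)] with k hk
    refine ⟨(hp k).1, smul_mem_regNormal (inv_nonneg.2 dist_nonneg)
      (sub_mem_regNormal_of_eventually_dist_le ?_)⟩
    filter_upwards [mem_interior_iff_mem_nhds.1 hk] with u huV huΩ
    exact hap k ▸ infDist_le_dist_of_mem ⟨huΩ, huV⟩
  obtain ⟨vb, -, φ, hφ, hvφ⟩ := (isCompact_sphere (0 : H) 1).tendsto_subseq hv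
  exact ⟨vb, mem_limNormal_of_eventually (hφ.tendsto_atTop.eventually hreg)
      (hp_tendsto.comp hφ.tendsto_atTop) hvφ,
    ge_of_tendsto (hvφ.inner tendsto_const_nhds) (Eventually.of_forall fun k => hvw (φ k))⟩

lemma tendsto_infDist_div_of_forall_inner_nonpos (hV : V ∈ 𝓝 z) (hC : IsClosed (Ω ∩ V))
    (hw : ∀ v ∈ limNormal Ω z, ⟪v, w⟫ ≤ 0) {zk : ℕ → H} {t : ℕ → ℝ} (hzk : ∀ k, zk k ∈ Ω)
    (hz : Tendsto zk atTop (𝓝 z)) (ht : ∀ k, 0 < t k) (ht0 : Tendsto t atTop (𝓝 0)) :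
    Tendsto (fun k => infDist (zk k + t k • w) (Ω ∩ V) / t k) atTop (𝓝 0) := by
  refine tendsto_order.2 ⟨fun b hb => Eventually.of_forall fun k =>
    hb.trans_le (div_nonneg infDist_nonneg (ht k).le), fun ε hε => ?_⟩
  by_contra h
  obtain ⟨φ, hφ, hφε⟩ :=
    extraction_of_frequently_atTop ((not_eventually.1 h).and_eventually (hz.eventually hV))
  have hsep : ∀ n, ε * t (φ n) ≤ infDist (zk (φ n) + t (φ n) • w) (Ω ∩ V) := fun n =>
    (le_div_iff₀ (ht _)).1 (not_lt.1 (hφε n).1)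
  obtain ⟨v, hv, hvw⟩ := exists_mem_limNormal_inner_ge hV hC (fun n => ⟨hzk _, (hφε n).2⟩)
    (hz.comp hφ.tendsto_atTop) (fun n => ht _) (ht0.comp hφ.tendsto_atTop) hε hsep
  linarith [hw v hv]

lemma exists_tendsto_add_smul_mem_of_tendsto_infDist_div {C : Set H} (hC : IsClosed C)
    (hne : C.Nonempty) {zk : ℕ → H} {t : ℕ → ℝ} (ht : ∀ k, 0 < t k)
    (h : Tendsto (fun k => infDist (zk k + t k • w) C / t k) atTop (𝓝 0)) :
    ∃ wk : ℕ → H, Tendsto wk atTop (𝓝 w) ∧ ∀ k, zk k + t k • wk k ∈ C := by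
  choose p hp hdist using fun k => hC.exists_infDist_eq_dist hne (zk k + t k • w)
  refine ⟨fun k => (t k)⁻¹ • (p k - zk k), tendsto_iff_norm_sub_tendsto_zero.2 ?_,
    fun k => by simpa [smul_smul, mul_inv_cancel₀ (ht k).ne'] using hp k⟩
  refine h.congr fun k => ?_
  have : (t k)⁻¹ • (p k - zk k) - w = -(t k)⁻¹ • (zk k + t k • w - p k) := by
    simp only [smul_sub, smul_add, neg_smul, inv_smul_smul₀ (ht k).ne']
    abel
  rw [this, norm_smul, norm_neg, norm_inv, Real.norm_of_nonneg (ht k).le, hdist, dist_eq_norm,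
    div_eq_inv_mul]

theorem mem_clarkeCone_of_forall_inner_nonpos (hloc : LocallyClosedAt Ω z)
    (hw : ∀ v ∈ limNormal Ω z, ⟪v, w⟫ ≤ 0) : w ∈ clarkeCone Ω z := by
  obtain ⟨V, hV, -, hC⟩ := hloc
  intro zk t hzk hz ht ht0
  obtain ⟨k, hk⟩ := (hz.eventually hV).exists
  obtain ⟨wk, hwk, hm⟩ := exists_tendsto_add_smul_mem_of_tendsto_infDist_div hC ⟨zk k, hzk k, hk⟩
    ht (tendsto_infDist_div_of_forall_inner_nonpos hV hC hw hzk hz ht ht0)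
  exact ⟨wk, hwk, fun k => (hm k).1⟩

end PolarOfLimitingNormals

section StrictSmoothness

variable {H : Type*} [NormedAddCommGroup H] [InnerProductSpace ℝ H] [ProperSpace H]
  {Ω : Set H} {z : H}

lemma StrictlySmoothAt.limNormal_subset_orthSet (h : StrictlySmoothAt Ω z) :
    limNormal Ω z ⊆ orthSet (paraCone Ω z) := by
  intro v hv u hu
  have h₁ := inner_nonpos_of_mem_limNormal_of_mem_clarkeCone hv (h ▸ hu)
  have h₂ := inner_nonpos_of_mem_limNormal_of_mem_clarkeCone hv (h ▸ neg_mem_paraCone hu)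
  rw [inner_neg_right] at h₂
  linarith

lemma StrictlySmoothAt.normallyRegularAt (h : StrictlySmoothAt Ω z) (hz : z ∈ Ω) :
    NormallyRegularAt Ω z :=
  (regNormal_subset_limNormal hz).antisymm
    (h.limNormal_subset_orthSet.trans (orthSet_paraCone_subset_regNormal hz))

theorem strictlySmoothAt_iff_limNormal_eq_orthSet (hz : z ∈ Ω) (hloc : LocallyClosedAt Ω z) :
    StrictlySmoothAt Ω z ↔ limNormal Ω z = orthSet (paraCone Ω z) := by
  refine ⟨fun h => h.limNormal_subset_orthSet.antisymm
    ((orthSet_paraCone_subset_regNormal hz).trans (regNormal_subset_limNormal hz)), fun h => ?_⟩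
  exact ((clarkeCone_subset_tanCone hz).trans (tanCone_subset_paraCone hz)).antisymm fun w hw =>
    mem_clarkeCone_of_forall_inner_nonpos hloc fun v hv => ((h ▸ hv : v ∈ orthSet _) w hw).le

end StrictSmoothness

section ProductSpace

open WithLp

variable {E F : Type*} [NormedAddCommGroup E] [InnerProductSpace ℝ E]
  [NormedAddCommGroup F] [InnerProductSpace ℝ F] {Γ : Set (E × F)} {z : E × F}

lemma regNormal2_eq_preimage :
    regNormal2 Γ z = toLp 2 ⁻¹' regNormal (ofLp ⁻¹' Γ) (toLp 2 z) := by
  have htan : tanCone (ofLp ⁻¹' Γ) (toLp 2 z) = ofLp ⁻¹' tanCone Γ z :=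
    tanCone_preimage (prodContinuousLinearEquiv 2 ℝ E F) Γ _
  ext v
  exact ⟨fun h u hu => h _ (htan.subset hu), fun h w hw => h (toLp 2 w) (htan.superset hw)⟩

lemma limNormal2_eq_preimage :
    limNormal2 Γ z = toLp 2 ⁻¹' limNormal (ofLp ⁻¹' Γ) (toLp 2 z) := by
  have hto := prod_continuous_toLp 2 E F
  have hof := prod_continuous_ofLp 2 E F
  ext v
  constructor
  · rintro ⟨zk, vk, hzk, hz, hvk, hv⟩
    exact ⟨fun k => toLp 2 (zk k), fun k => toLp 2 (vk k), hzk, (hto.tendsto z).comp hz,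
      fun k => by simpa [regNormal2_eq_preimage] using hvk k, (hto.tendsto v).comp hv⟩
  · rintro ⟨zk, vk, hzk, hz, hvk, hv⟩
    exact ⟨fun k => ofLp (zk k), fun k => ofLp (vk k), hzk, (hof.tendsto _).comp hz,
      fun k => by simpa [regNormal2_eq_preimage] using hvk k, (hof.tendsto _).comp hv⟩

lemma orthSet2_eq_preimage (s : Set (E × F)) : orthSet2 s = toLp 2 ⁻¹' orthSet (ofLp ⁻¹' s) := by
  ext v
  exact ⟨fun h u hu => h _ hu, fun h w hw => h (toLp 2 w) hw⟩

lemma strictlySmoothAt_ofLp_preimage_iff :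
    StrictlySmoothAt (ofLp ⁻¹' Γ) (toLp 2 z) ↔ StrictlySmoothAt Γ z :=
  strictlySmoothAt_preimage_iff (prodContinuousLinearEquiv 2 ℝ E F) Γ _

variable [FiniteDimensional ℝ E] [FiniteDimensional ℝ F]

theorem strictlySmoothAt_iff_limNormal2_eq_orthSet2 (hz : z ∈ Γ) (hloc : LocallyClosedAt Γ z) :
    StrictlySmoothAt Γ z ↔ limNormal2 Γ z = orthSet2 (paraCone Γ z) := by
  have hpara : paraCone (ofLp ⁻¹' Γ) (toLp 2 z) = ofLp ⁻¹' paraCone Γ z :=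
    paraCone_preimage (prodContinuousLinearEquiv 2 ℝ E F) Γ _
  rw [← strictlySmoothAt_ofLp_preimage_iff,
    strictlySmoothAt_iff_limNormal_eq_orthSet (z := toLp 2 z) hz
      (hloc.preimage (prod_continuous_ofLp 2 E F)),
    limNormal2_eq_preimage, orthSet2_eq_preimage, ← hpara]
  exact (preimage_eq_preimage (toLp_surjective 2)).symm

theorem StrictlySmoothAt.normallyRegular2At (h : StrictlySmoothAt Γ z) (hz : z ∈ Γ) :
    NormallyRegular2At Γ z := by
  have := (strictlySmoothAt_ofLp_preimage_iff.2 h).normallyRegularAt hz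
  rw [NormallyRegular2At, regNormal2_eq_preimage, limNormal2_eq_preimage, this]

end ProductSpace

section Coderivative

variable {E F : Type*} [NormedAddCommGroup E] [InnerProductSpace ℝ E]
  [NormedAddCommGroup F] [InnerProductSpace ℝ F]

lemma coderivGraph_eq_iff {Γ : Set (E × F)} {z : E × F} {S : Set (E × F)} :
    coderivGraph Γ z = {q : F × E | (q.2, -q.1) ∈ S} ↔ limNormal2 Γ z = S := by
  refine ⟨fun h => ?_, fun h => h ▸ rfl⟩
  ext p
  simpa [coderivGraph] using Set.ext_iff.1 h (-p.2, p.1)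

lemma isLinearSubspace_setOf_mem_orthSet2 (s : Set (E × F)) :
    IsLinearSubspace {q : F × E | (q.2, -q.1) ∈ orthSet2 s} := by
  refine ⟨{ carrier := {q : F × E | (q.2, -q.1) ∈ orthSet2 s}
            add_mem' := fun {a b} ha hb w hw => ?_
            zero_mem' := fun w _ => by simp [inner2]
            smul_mem' := fun c q hq w hw => ?_ }, rfl⟩
  · have ha := ha w hw
    have hb := hb w hw
    simp only [inner2, Prod.fst_add, Prod.snd_add, neg_add, inner_add_left] at ha hb ⊢
    linarith
  · have hq := hq w hw
    simp only [inner2, Prod.smul_fst, Prod.smul_snd, ← smul_neg, real_inner_smul_left] at hq ⊢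
    rw [← mul_add, hq, mul_zero]

end Coderivative

/-- Lemma 2.4: characterization of strict proto-differentiability via
the strict derivative and the limiting coderivative. -/
theorem stmt_2 {n m : ℕ} (F : Euc n → Set (Euc m)) (xb : Euc n) (yb : Euc m)
    (hy : yb ∈ F xb) (hloc : LocallyClosedAt (gphOf F) (xb, yb)) :
    (StrictlySmoothAt (gphOf F) (xb, yb) ↔
      (IsLinearSubspace (paraCone (gphOf F) (xb, yb)) ∧
        IsLinearSubspace (coderivGraph (gphOf F) (xb, yb)) ∧
        coderivGraph (gphOf F) (xb, yb) =
          {q : Euc m × Euc n | (q.2, -q.1) ∈ orthSet2 (paraCone (gphOf F) (xb, yb))})) ∧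
    (StrictlySmoothAt (gphOf F) (xb, yb) → NormallyRegular2At (gphOf F) (xb, yb)) := by
  have hz : (xb, yb) ∈ gphOf F := hy
  have hsmooth := strictlySmoothAt_iff_limNormal2_eq_orthSet2 hz hloc
  refine ⟨⟨fun h => ?_, fun ⟨_, _, h⟩ => hsmooth.2 (coderivGraph_eq_iff.1 h)⟩,
    fun h => h.normallyRegular2At hz⟩
  have hN := coderivGraph_eq_iff.2 (hsmooth.1 h)
  exact ⟨h.isLinearSubspace_paraCone, hN ▸ isLinearSubspace_setOf_mem_orthSet2 _, hN⟩
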